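/- arXiv:2202.01173 — 6 statements merged into one kernel-verified Lean document; each statement's English description precedes it below -/
import Mathlib

section
/- For every positive integer n, the harmonic sum Σ_{k=1}^n 1/k satisfies |Σ_{k=1}^n 1/k − ln n − γ − 1/(2n)| ≤ 1/(8n²), where γ is the Euler–Mascheroni constant. -/
open BigOperators Filter Real

lemma aux_sinh_le_mul_cosh {s : ℝ} (hs : 0 ≤ s) : Real.sinh s ≤ s * Real.cosh s := by
  have key : ∀ x : ℝ, HasDerivAt (fun t => t * Real.cosh t - Real.sinh t) (x * Real.sinh x) x := by
    intro x
    have h2 := (hasDerivAt_id x).mul (Real.hasDerivAt_cosh x)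
    have h3 := Real.hasDerivAt_sinh x
    exact (h2.sub h3).congr_deriv (by simp [id])
  have mono : MonotoneOn (fun t => t * Real.cosh t - Real.sinh t) (Set.Ici 0) := by
    apply monotoneOn_of_deriv_nonneg (convex_Ici 0)
    · exact (Continuous.continuousOn (by continuity))
    · intro x _
      exact (key x).differentiableAt.differentiableWithinAt
    · intro x hx
      rw [interior_Ici, Set.mem_Ioi] at hx
      rw [(key x).deriv]
      exact mul_nonneg hx.le (Real.sinh_nonneg_iff.mpr hx.le)
  have := mono Set.self_mem_Ici hs hs
  simpa using this

lemma aux_log_le {y : ℝ} (hy : 1 ≤ y) : Real.log y ≤ (y - 1/y) / 2 := by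
  have hy0 : 0 < y := lt_of_lt_of_le one_pos hy
  have ht : 0 ≤ Real.log y := Real.log_nonneg hy
  have h := Real.self_le_sinh_iff.mpr ht
  rw [Real.sinh_eq, Real.exp_log hy0, Real.exp_neg, Real.exp_log hy0] at h
  calc Real.log y ≤ (y - y⁻¹)/2 := h
    _ = (y - 1/y)/2 := by ring

lemma aux_le_log {y : ℝ} (hy : 1 ≤ y) : 2 * (y - 1) / (y + 1) ≤ Real.log y := by
  have hy0 : 0 < y := lt_of_lt_of_le one_pos hy
  set s := Real.log y / 2 with hs_def
  have hs : 0 ≤ s := by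
    have := Real.log_nonneg hy
    rw [hs_def]; linarith
  have h := aux_sinh_le_mul_cosh hs
  rw [Real.sinh_eq, Real.cosh_eq] at h
  have he : Real.exp s * Real.exp s = y := by
    rw [← Real.exp_add, hs_def]
    rw [show Real.log y / 2 + Real.log y / 2 = Real.log y by ring, Real.exp_log hy0]
  have he2 : Real.exp s * Real.exp (-s) = 1 := by
    rw [← Real.exp_add]; simp
  have hep : 0 < Real.exp s := Real.exp_pos s
  -- multiply h by 2 * exp s
  have h2 : y - 1 ≤ s * (y + 1) := by nlinarith [h, he, he2, hep]
  rw [div_le_iff₀ (by linarith : (0:ℝ) < y + 1)]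
  rw [hs_def] at h2
  linarith

lemma step_bounds {K : ℝ} (hK : 1 ≤ K) :
    0 ≤ 1/(2*K) + 1/(2*(K+1)) - (Real.log (K+1) - Real.log K) ∧
    1/(2*K) + 1/(2*(K+1)) - (Real.log (K+1) - Real.log K) ≤ 1/(8*K^2) - 1/(8*(K+1)^2) := by
  have hK0 : 0 < K := lt_of_lt_of_le one_pos hK
  have hK1 : 0 < K + 1 := by linarith
  have hlog : Real.log (K+1) - Real.log K = Real.log ((K+1)/K) := by
    rw [Real.log_div (by positivity) (by positivity)]
  have hy : 1 ≤ (K+1)/K := by rw [le_div_iff₀ hK0]; linarith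
  constructor
  · have h := aux_log_le hy
    have heq : ((K+1)/K - 1/((K+1)/K)) / 2 = 1/(2*K) + 1/(2*(K+1)) := by
      field_simp
      ring
    rw [hlog]
    rw [heq] at h
    linarith
  · have h := aux_le_log hy
    have heq : 2 * ((K+1)/K - 1) / ((K+1)/K + 1) = 2 / (2*K+1) := by
      rw [div_eq_div_iff (by positivity) (by positivity)]
      field_simp
      ring
    rw [heq] at h
    rw [hlog]
    have key : 1/(2*K) + 1/(2*(K+1)) - (1/(8*K^2) - 1/(8*(K+1)^2)) ≤ 2 / (2*K+1) := by
      rw [sub_le_iff_le_add]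
      field_simp
      ring_nf
      nlinarith [sq_nonneg K, sq_nonneg (K+1), hK0]
    linarith

noncomputable def Fharm (n : ℕ) : ℝ :=
  (∑ k ∈ Finset.Icc 1 n, (1:ℝ)/k) - Real.log n - 1/(2*n)

lemma Fharm_step (k : ℕ) (hk : 1 ≤ k) :
    Fharm k ≤ Fharm (k+1) ∧
    Fharm (k+1) ≤ Fharm k + (1/(8*(k:ℝ)^2) - 1/(8*((k:ℝ)+1)^2)) := by
  have hK : (1:ℝ) ≤ (k:ℝ) := by exact_mod_cast hk
  have hK0 : (0:ℝ) < k := by linarith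
  obtain ⟨h1, h2⟩ := step_bounds hK
  have hsum : (∑ j ∈ Finset.Icc 1 (k+1), (1:ℝ)/j) = (∑ j ∈ Finset.Icc 1 k, (1:ℝ)/j) + 1/((k:ℝ)+1) := by
    rw [Finset.sum_Icc_succ_top (by omega : 1 ≤ k + 1)]
    push_cast
    ring
  have hdiff : Fharm (k+1) - Fharm k
      = 1/(2*(k:ℝ)) + 1/(2*((k:ℝ)+1)) - (Real.log ((k:ℝ)+1) - Real.log (k:ℝ)) := by
    unfold Fharm
    rw [hsum]
    push_cast
    field_simp
    ring
  constructor
  · linarith [hdiff, h1]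
  · linarith [hdiff, h2]

lemma Fharm_tendsto :
    Filter.Tendsto Fharm Filter.atTop (nhds Real.eulerMascheroniConstant) := by
  have h1 := Real.tendsto_harmonic_sub_log
  have h2 : Filter.Tendsto (fun n : ℕ => 1/(2*(n:ℝ))) Filter.atTop (nhds 0) := by
    have := tendsto_one_div_atTop_nhds_zero_nat (𝕜 := ℝ)
    have h3 := this.const_mul (1/2 : ℝ)
    simp only [mul_zero] at h3
    apply h3.congr
    intro n
    ring
  have := h1.sub h2
  rw [sub_zero] at this
  apply this.congr
  intro n
  unfold Fharm
  rw [harmonic_eq_sum_Icc]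
  push_cast
  simp [one_div]

/-- for every positive integer `n`,
`|∑_{k=1}^n 1/k − ln n − γ − 1/(2n)| ≤ 1/(8n²)`, where `γ` is the Euler–Mascheroni
constant. -/
theorem harmonic_asymptotics (n : ℕ) (hn : 0 < n) :
    |(∑ k ∈ Finset.Icc 1 n, (1 : ℝ) / k) - Real.log n - Real.eulerMascheroniConstant
        - 1 / (2 * n)| ≤ 1 / (8 * (n : ℝ) ^ 2) := by
  have ind : ∀ N, n ≤ N → Fharm n ≤ Fharm N ∧
      Fharm N ≤ Fharm n + (1/(8*(n:ℝ)^2) - 1/(8*(N:ℝ)^2)) := by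
    intro N hN
    induction N, hN using Nat.le_induction with
    | base => exact ⟨le_refl _, by simp⟩
    | succ N hN ih =>
      obtain ⟨ih1, ih2⟩ := ih
      obtain ⟨s1, s2⟩ := Fharm_step N (le_trans hn hN)
      refine ⟨le_trans ih1 s1, ?_⟩
      push_cast
      push_cast at ih2 s2
      linarith
  have hle : Fharm n ≤ Real.eulerMascheroniConstant := by
    apply ge_of_tendsto Fharm_tendsto
    filter_upwards [Filter.eventually_ge_atTop n] with N hN
    exact (ind N hN).1
  have hge : Real.eulerMascheroniConstant ≤ Fharm n + 1/(8*(n:ℝ)^2) := by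
    apply le_of_tendsto Fharm_tendsto
    filter_upwards [Filter.eventually_ge_atTop n] with N hN
    have h := (ind N hN).2
    have : (0:ℝ) ≤ 1/(8*(N:ℝ)^2) := by positivity
    linarith
  have hF : Fharm n = (∑ k ∈ Finset.Icc 1 n, (1 : ℝ) / k) - Real.log n - 1/(2*n) := rfl
  rw [hF] at hle hge
  rw [abs_le]
  constructor <;> push_cast at hle hge ⊢ <;> linarith
end

section
/- Let (p_k)_{k=1}^{D} be a probability distribution and K ⊆ {1,…,D} a subset with Σ_{k∈K} p_k ≤ m/2 where m = |K|/D ∈ (0,1). Then the Shannon entropy satisfies −Σ_k p_k ln p_k ≤ ln D + (m/2) ln 2 + (1 − m/2) ln((1−m)/(1−m/2)). -/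
open BigOperators

/-- if a probability vector `p` on `{1,…,D}` gives total mass at most `m/2`
to a subset `K` of fractional size `m = |K|/D ∈ (0,1)`, then its Shannon entropy is at most
`ln D + (m/2) ln 2 + (1 − m/2) ln((1−m)/(1−m/2))`. -/
theorem shannon_entropy_constrained (D : ℕ) (p : Fin D → ℝ)
    (hp : ∀ k, 0 ≤ p k) (hsum : ∑ k, p k = 1)
    (K : Finset (Fin D)) (m : ℝ) (hm : m = (K.card : ℝ) / D)
    (hm0 : 0 < m) (hm1 : m < 1)
    (hK : ∑ k ∈ K, p k ≤ m / 2) :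
    ∑ k, Real.negMulLog (p k) ≤
      Real.log D + (m / 2) * Real.log 2 + (1 - m / 2) * Real.log ((1 - m) / (1 - m / 2)) := by
  have hD : 0 < (D : ℝ) := by
    rcases Nat.eq_zero_or_pos D with h | h
    · exfalso
      have hD0 : (D : ℝ) = 0 := by rw [h]; simp
      rw [hm, hD0, div_zero] at hm0
      exact lt_irrefl 0 hm0
    · exact_mod_cast h
  have h1m : 0 < 1 - m := by linarith
  have h1m2 : 0 < 1 - m / 2 := by linarith
  set qK : ℝ := 1 / (2 * D) with hqK
  set qC : ℝ := (1 - m / 2) / ((1 - m) * D) with hqC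
  have hqKpos : 0 < qK := by positivity
  have hqCpos : 0 < qC := by positivity
  set q : Fin D → ℝ := fun k => if k ∈ K then qK else qC with hq
  have hqpos : ∀ k, 0 < q k := by
    intro k; by_cases h : k ∈ K <;> simp [hq, h, hqKpos, hqCpos]
  have hKcard : (K.card : ℝ) = m * D := by rw [hm]; field_simp
  have hKCcard : ((Kᶜ.card : ℕ) : ℝ) = (1 - m) * D := by
    have : Kᶜ.card = D - K.card := by
      simp [Finset.card_compl]
    rw [this]
    have hle : K.card ≤ D := (Finset.card_le_card (Finset.subset_univ K)).trans_eq
      (by simp)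
    push_cast [hle]
    rw [hKcard]; ring
  -- sums of p and q over K and its complement
  set s : ℝ := ∑ k ∈ K, p k with hs
  have hsplit : ∑ k ∈ Kᶜ, p k = 1 - s := by
    have := Finset.sum_add_sum_compl K p
    rw [hsum] at this; linarith
  have hs0 : 0 ≤ s := Finset.sum_nonneg fun k _ => hp k
  -- Gibbs inequality
  have gibbs : ∑ k, Real.negMulLog (p k) ≤ ∑ k, (q k - p k - p k * Real.log (q k)) := by
    apply Finset.sum_le_sum
    intro k _
    rcases eq_or_lt_of_le (hp k) with h | h
    · rw [← h]
      simp [Real.negMulLog]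
      exact (hqpos k).le
    · have hlog := Real.log_le_sub_one_of_pos (div_pos (hqpos k) h)
      rw [Real.log_div (hqpos k).ne' h.ne'] at hlog
      have := mul_le_mul_of_nonneg_left hlog h.le
      rw [Real.negMulLog]
      have hne : p k ≠ 0 := h.ne'
      field_simp at this ⊢
      nlinarith
  have hqsumK : ∑ k ∈ K, q k = K.card * qK := by
    rw [Finset.sum_congr rfl (fun k hk => if_pos hk), Finset.sum_const, nsmul_eq_mul]
  have hqsumKC : ∑ k ∈ Kᶜ, q k = Kᶜ.card * qC := by
    rw [Finset.sum_congr rfl (fun k hk => if_neg (Finset.mem_compl.mp hk)),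
      Finset.sum_const, nsmul_eq_mul]
  have hqsum : ∑ k, q k = 1 := by
    rw [← Finset.sum_add_sum_compl K q, hqsumK, hqsumKC, hKcard, hKCcard, hqK, hqC]
    field_simp
    ring
  -- compute the Gibbs bound
  have hlogsplit : ∑ k, p k * Real.log (q k)
      = s * Real.log qK + (1 - s) * Real.log qC := by
    rw [← Finset.sum_add_sum_compl K (fun k => p k * Real.log (q k))]
    have h1 : ∑ k ∈ K, p k * Real.log (q k) = s * Real.log qK := by
      rw [hs, Finset.sum_mul]
      exact Finset.sum_congr rfl fun k hk => by rw [hq]; simp [if_pos hk]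
    have h2 : ∑ k ∈ Kᶜ, p k * Real.log (q k) = (1 - s) * Real.log qC := by
      rw [← hsplit, Finset.sum_mul]
      exact Finset.sum_congr rfl fun k hk => by
        rw [hq]; simp [if_neg (Finset.mem_compl.mp hk)]
    rw [h1, h2]
  have hbound : ∑ k, (q k - p k - p k * Real.log (q k))
      = -(s * Real.log qK + (1 - s) * Real.log qC) := by
    rw [Finset.sum_sub_distrib, Finset.sum_sub_distrib, hqsum, hsum, hlogsplit]
    ring
  -- monotonicity in s
  have hAB : Real.log qK ≤ Real.log qC := by
    apply Real.log_le_log hqKpos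
    rw [hqK, hqC, div_le_div_iff₀ (by positivity) (by positivity)]
    nlinarith
  have hmono : -(s * Real.log qK + (1 - s) * Real.log qC)
      ≤ -((m / 2) * Real.log qK + (1 - m / 2) * Real.log qC) := by
    nlinarith [mul_nonneg (by linarith : (0:ℝ) ≤ m / 2 - s)
      (by linarith : (0:ℝ) ≤ Real.log qC - Real.log qK)]
  -- final computation
  have hfinal : -((m / 2) * Real.log qK + (1 - m / 2) * Real.log qC)
      = Real.log D + (m / 2) * Real.log 2 + (1 - m / 2) * Real.log ((1 - m) / (1 - m / 2)) := by
    rw [hqK, hqC]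
    rw [Real.log_div one_ne_zero (by positivity), Real.log_mul two_ne_zero hD.ne',
      Real.log_div h1m2.ne' (by positivity), Real.log_mul h1m.ne' hD.ne',
      Real.log_div h1m.ne' h1m2.ne']
    simp [Real.log_one]
    ring
  calc ∑ k, Real.negMulLog (p k) ≤ ∑ k, (q k - p k - p k * Real.log (q k)) := gibbs
    _ = -(s * Real.log qK + (1 - s) * Real.log qC) := hbound
    _ ≤ -((m / 2) * Real.log qK + (1 - m / 2) * Real.log qC) := hmono
    _ = _ := hfinal
end

section
/- Let (p_k)_{k=1}^{D} be a probability distribution, K ⊆ {1,…,D} with Σ_{k∈K} p_k ≤ m/2 where m = |K|/D ∈ (0,1), and let 0 < α < 1. Then (1/(1−α)) ln Σ_k p_k^α ≤ ln D + (1/(1−α)) ln( m/2^α + (1 − m/2)^α (1−m)^{1−α} ). -/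
open BigOperators

/-- Tangent line bound for concave `x ↦ x^α`. -/
lemma rpow_tangent_le {α a x : ℝ} (hα0 : 0 < α) (hα1 : α < 1) (ha : 0 < a) (hx : 0 ≤ x) :
    x ^ α ≤ a ^ α + α * a ^ (α - 1) * (x - a) := by
  have ht : (0:ℝ) ≤ x / a := div_nonneg hx ha.le
  have key : (x / a) ^ α ≤ 1 + α * (x / a - 1) := by
    have := rpow_one_add_le_one_add_mul_self (s := x / a - 1) (by linarith) hα0.le hα1.le
    simpa using this
  have hxa : x ^ α = a ^ α * (x / a) ^ α := by
    rw [← Real.mul_rpow ha.le ht, mul_div_cancel₀ _ ha.ne']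
  rw [hxa]
  have h2 : a ^ α * (1 + α * (x / a - 1)) = a ^ α + α * a ^ (α - 1) * (x - a) := by
    have : a ^ (α - 1) = a ^ α / a := by rw [Real.rpow_sub ha, Real.rpow_one]
    rw [this]
    field_simp
  calc a ^ α * (x / a) ^ α ≤ a ^ α * (1 + α * (x / a - 1)) :=
        mul_le_mul_of_nonneg_left key (Real.rpow_nonneg ha.le α)
    _ = _ := h2

/-- if a probability vector `p` on `{1,…,D}` gives total mass at most `m/2`
to a subset `K` of fractional size `m = |K|/D ∈ (0,1)`, then for `0 < α < 1` its Rényi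
entropy of order `α` is at most
`ln D + (1/(1−α)) ln(m/2^α + (1 − m/2)^α (1−m)^{1−α})`. -/
theorem renyi_entropy_constrained (D : ℕ) (p : Fin D → ℝ)
    (hp : ∀ k, 0 ≤ p k) (hsum : ∑ k, p k = 1)
    (K : Finset (Fin D)) (m : ℝ) (hm : m = (K.card : ℝ) / D)
    (hm0 : 0 < m) (hm1 : m < 1)
    (hK : ∑ k ∈ K, p k ≤ m / 2)
    (α : ℝ) (hα0 : 0 < α) (hα1 : α < 1) :
    (1 / (1 - α)) * Real.log (∑ k, p k ^ α) ≤
      Real.log D + (1 / (1 - α)) *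
        Real.log (m / 2 ^ α + (1 - m / 2) ^ α * (1 - m) ^ (1 - α)) := by
  -- basic positivity facts
  have hD0 : (D : ℝ) ≠ 0 := by
    intro h
    rw [hm, h, div_zero] at hm0
    exact lt_irrefl 0 hm0
  have hDr : (0:ℝ) < D := lt_of_le_of_ne (Nat.cast_nonneg D) (Ne.symm hD0)
  set Dr : ℝ := (D : ℝ) with hDrdef
  have hcK : (K.card : ℝ) = m * Dr := by
    rw [hm, div_mul_cancel₀ _ hD0]
  have hKle : K.card ≤ D := by
    simpa using Finset.card_le_univ K
  have hcKc : ((Kᶜ : Finset (Fin D)).card : ℝ) = (1 - m) * Dr := by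
    rw [Finset.card_compl, Fintype.card_fin, Nat.cast_sub hKle, hcK]
    ring
  have h1m : (0:ℝ) < 1 - m := by linarith
  have h1m2 : (0:ℝ) < 1 - m / 2 := by linarith
  -- tangent points
  set a : ℝ := 1 / (2 * Dr) with hadef
  set b : ℝ := (1 - m / 2) / ((1 - m) * Dr) with hbdef
  have ha : 0 < a := by positivity
  have hb : 0 < b := by positivity
  have hab : a ≤ b := by
    rw [hadef, hbdef, div_le_div_iff₀ (by positivity) (by positivity)]
    nlinarith
  set S : ℝ := ∑ k ∈ K, p k with hSdef
  have hS0 : 0 ≤ S := Finset.sum_nonneg fun k _ => hp k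
  have hSc : ∑ k ∈ Kᶜ, p k = 1 - S := by
    have := Finset.sum_add_sum_compl K p
    rw [hsum] at this
    linarith
  -- bound sum over K
  have hboundK : ∑ k ∈ K, p k ^ α ≤ (K.card : ℝ) * a ^ α + α * a ^ (α - 1) * (S - (K.card : ℝ) * a) := by
    calc ∑ k ∈ K, p k ^ α ≤ ∑ k ∈ K, (a ^ α + α * a ^ (α - 1) * (p k - a)) :=
          Finset.sum_le_sum fun k _ => rpow_tangent_le hα0 hα1 ha (hp k)
      _ = (K.card : ℝ) * a ^ α + α * a ^ (α - 1) * (S - (K.card : ℝ) * a) := by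
          rw [Finset.sum_add_distrib, Finset.sum_const, nsmul_eq_mul, ← Finset.mul_sum,
            Finset.sum_sub_distrib, Finset.sum_const, nsmul_eq_mul, hSdef]
  have hboundKc : ∑ k ∈ Kᶜ, p k ^ α ≤ ((Kᶜ : Finset (Fin D)).card : ℝ) * b ^ α
      + α * b ^ (α - 1) * ((1 - S) - ((Kᶜ : Finset (Fin D)).card : ℝ) * b) := by
    calc ∑ k ∈ Kᶜ, p k ^ α ≤ ∑ k ∈ Kᶜ, (b ^ α + α * b ^ (α - 1) * (p k - b)) :=
          Finset.sum_le_sum fun k _ => rpow_tangent_le hα0 hα1 hb (hp k)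
      _ = _ := by
          rw [Finset.sum_add_distrib, Finset.sum_const, nsmul_eq_mul, ← Finset.mul_sum,
            Finset.sum_sub_distrib, Finset.sum_const, nsmul_eq_mul, hSc]
  -- simplify the tangent-point masses
  have hKa : (K.card : ℝ) * a = m / 2 := by
    rw [hcK, hadef]; field_simp
  have hKcb : ((Kᶜ : Finset (Fin D)).card : ℝ) * b = 1 - m / 2 := by
    rw [hcKc, hbdef]; field_simp
  -- the correction terms are nonpositive
  have hcorr : α * a ^ (α - 1) * (S - m / 2) + α * b ^ (α - 1) * ((1 - S) - (1 - m / 2)) ≤ 0 := by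
    have hba : b ^ (α - 1) ≤ a ^ (α - 1) :=
      Real.rpow_le_rpow_of_nonpos ha hab (by linarith)
    have heq : α * a ^ (α - 1) * (S - m / 2) + α * b ^ (α - 1) * ((1 - S) - (1 - m / 2))
        = (α * (m / 2 - S)) * (b ^ (α - 1) - a ^ (α - 1)) := by ring
    rw [heq]
    exact mul_nonpos_of_nonneg_of_nonpos (by nlinarith) (by linarith)
  -- total bound
  set inner : ℝ := m / 2 ^ α + (1 - m / 2) ^ α * (1 - m) ^ (1 - α) with hinner
  have hE1 : (K.card : ℝ) * a ^ α = Dr ^ (1 - α) * (m / 2 ^ α) := by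
    rw [hcK, hadef, Real.div_rpow zero_le_one (by positivity), Real.one_rpow,
      Real.mul_rpow (by norm_num) hDr.le, Real.rpow_sub hDr, Real.rpow_one]
    field_simp
  have hE2 : ((Kᶜ : Finset (Fin D)).card : ℝ) * b ^ α
      = Dr ^ (1 - α) * ((1 - m / 2) ^ α * (1 - m) ^ (1 - α)) := by
    rw [hcKc, hbdef, Real.div_rpow h1m2.le (by positivity),
      Real.mul_rpow h1m.le hDr.le, Real.rpow_sub hDr, Real.rpow_one,
      Real.rpow_sub h1m, Real.rpow_one]
    field_simp
  have hmain : ∑ k, p k ^ α ≤ Dr ^ (1 - α) * inner := by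
    have hsplit : ∑ k, p k ^ α = (∑ k ∈ K, p k ^ α) + ∑ k ∈ Kᶜ, p k ^ α :=
      (Finset.sum_add_sum_compl K _).symm
    rw [hsplit, hinner]
    have := add_le_add hboundK hboundKc
    rw [hKa, hKcb] at this
    calc (∑ k ∈ K, p k ^ α) + ∑ k ∈ Kᶜ, p k ^ α
        ≤ (K.card : ℝ) * a ^ α + ((Kᶜ : Finset (Fin D)).card : ℝ) * b ^ α
          + (α * a ^ (α - 1) * (S - m / 2) + α * b ^ (α - 1) * ((1 - S) - (1 - m / 2))) := by
          linarith
      _ ≤ (K.card : ℝ) * a ^ α + ((Kᶜ : Finset (Fin D)).card : ℝ) * b ^ α := by linarith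
      _ = Dr ^ (1 - α) * (m / 2 ^ α + (1 - m / 2) ^ α * (1 - m) ^ (1 - α)) := by
          rw [hE1, hE2]; ring
  -- positivity of the sum of powers
  have hSigpos : 0 < ∑ k, p k ^ α := by
    obtain ⟨k, hk⟩ : ∃ k, 0 < p k := by
      by_contra h
      push_neg at h
      have : ∑ k, p k ≤ 0 := Finset.sum_nonpos fun k _ => h k
      linarith
    exact lt_of_lt_of_le (Real.rpow_pos_of_pos hk α)
      (Finset.single_le_sum (fun k _ => Real.rpow_nonneg (hp k) α) (Finset.mem_univ k))
  have hinnerpos : 0 < inner := by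
    rw [hinner]
    have h1 : 0 < m / 2 ^ α := by positivity
    have h2 : 0 ≤ (1 - m / 2) ^ α * (1 - m) ^ (1 - α) := by positivity
    linarith
  -- take logarithms
  have hlog : Real.log (∑ k, p k ^ α) ≤ (1 - α) * Real.log Dr + Real.log inner := by
    calc Real.log (∑ k, p k ^ α) ≤ Real.log (Dr ^ (1 - α) * inner) :=
          Real.log_le_log hSigpos hmain
      _ = (1 - α) * Real.log Dr + Real.log inner := by
          rw [Real.log_mul (by positivity) hinnerpos.ne', Real.log_rpow hDr]
  have h1α : (0:ℝ) < 1 - α := by linarith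
  have : (1 / (1 - α)) * Real.log (∑ k, p k ^ α)
      ≤ (1 / (1 - α)) * ((1 - α) * Real.log Dr + Real.log inner) :=
    mul_le_mul_of_nonneg_left hlog (by positivity)
  calc (1 / (1 - α)) * Real.log (∑ k, p k ^ α)
      ≤ (1 / (1 - α)) * ((1 - α) * Real.log Dr + Real.log inner) := this
    _ = Real.log Dr + (1 / (1 - α)) * Real.log inner := by
        field_simp
    _ = _ := by rw [hinner]
end

section
/- For 0 < m < 1, the quantity (m/2) ln 2 + (1 − m/2) ln((1−m)/(1−m/2)) is strictly negative. -/
/-- for `0 < m < 1`, the entropy deficit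
`(m/2) ln 2 + (1 − m/2) ln((1−m)/(1−m/2))` is strictly negative. -/
theorem entropy_deficit_neg (m : ℝ) (hm0 : 0 < m) (hm1 : m < 1) :
    (m / 2) * Real.log 2 + (1 - m / 2) * Real.log ((1 - m) / (1 - m / 2)) < 0 := by
  have h1 : (0:ℝ) < 1 - m := by linarith
  have h2 : (0:ℝ) < 1 - m / 2 := by linarith
  have hx : (0:ℝ) < (1 - m) / (1 - m / 2) := div_pos h1 h2
  have hne : (1 - m) / (1 - m / 2) ≠ 1 := by
    intro h
    have := (div_eq_one_iff_eq h2.ne').mp h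
    linarith
  have hlog := Real.log_lt_sub_one_of_pos hx hne
  have hlog2 : Real.log 2 < 1 := by
    have := Real.log_lt_sub_one_of_pos (by norm_num : (0:ℝ) < 2) (by norm_num)
    linarith
  have heq : (1 - m / 2) * ((1 - m) / (1 - m / 2) - 1) = -(m/2) := by
    rw [mul_sub, mul_div_cancel₀ _ h2.ne']; ring
  have key : (1 - m / 2) * Real.log ((1 - m) / (1 - m / 2)) < -(m/2) := by
    have h := mul_lt_mul_of_pos_left hlog h2
    linarith [h.trans_eq heq]
  nlinarith [key, hlog2, hm0]
end

section
/- For 0 < α < 1, the Rényi entropy S_α(ρ) = (1/(1−α)) ln Tr(ρ^α) is concave on density matrices: Σ_j λ_j S_α(ρ_j) ≤ S_α(Σ_j λ_j ρ_j) for weights λ_j ≥ 0 summing to 1. -/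
open Matrix BigOperators
open scoped ComplexOrder

section RenyiAux

variable {D : ℕ}

private lemma renyi_smul_posSemidef {w : ℝ} (hw : 0 ≤ w) {A : Matrix (Fin D) (Fin D) ℂ}
    (hA : A.PosSemidef) : ((w : ℂ) • A).PosSemidef := by
  refine Matrix.PosSemidef.of_dotProduct_mulVec_nonneg ?_ ?_
  · have := hA.1
    unfold Matrix.IsHermitian at *
    rw [conjTranspose_smul, this]
    congr 1
    simp [Complex.star_def, Complex.conj_ofReal]
  · intro x
    have h0 : (0:ℂ) ≤ (w : ℂ) := by exact_mod_cast Complex.zero_le_real.mpr hw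
    have := hA.dotProduct_mulVec_nonneg x
    calc (0:ℂ) = (w:ℂ) * 0 := by ring
    _ ≤ (w:ℂ) * (star x ⬝ᵥ A *ᵥ x) := mul_le_mul_of_nonneg_left this h0
    _ = star x ⬝ᵥ ((w:ℂ) • A) *ᵥ x := by
        rw [smul_mulVec, dotProduct_smul]; simp [smul_eq_mul]

private lemma renyi_diag_re_nonneg {A : Matrix (Fin D) (Fin D) ℂ} (hA : A.PosSemidef)
    (i : Fin D) : 0 ≤ (A i i).re := by
  have := hA.dotProduct_mulVec_nonneg (Pi.single i 1)
  have h : star (Pi.single i 1 : Fin D → ℂ) ⬝ᵥ A *ᵥ Pi.single i 1 = A i i := by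
    simp [dotProduct, mulVec, Pi.single_apply, Finset.mul_sum]
  rw [h] at this
  exact (Complex.le_def.mp this).1

private lemma renyi_row_sum_one {W : Matrix (Fin D) (Fin D) ℂ}
    (hW : W ∈ Matrix.unitaryGroup (Fin D) ℂ) (i : Fin D) :
    ∑ k, Complex.normSq (W i k) = 1 := by
  have h := Matrix.mem_unitaryGroup_iff.mp hW
  have h2 := congrFun (congrFun h i) i
  rw [Matrix.mul_apply] at h2
  simp only [Matrix.star_apply, Matrix.one_apply_eq, Complex.star_def,
    Complex.mul_conj] at h2
  exact_mod_cast h2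

private lemma renyi_col_sum_one {W : Matrix (Fin D) (Fin D) ℂ}
    (hW : W ∈ Matrix.unitaryGroup (Fin D) ℂ) (k : Fin D) :
    ∑ i, Complex.normSq (W i k) = 1 := by
  have h := Matrix.mem_unitaryGroup_iff'.mp hW
  have h2 := congrFun (congrFun h k) k
  rw [Matrix.mul_apply] at h2
  simp only [Matrix.star_apply, Matrix.one_apply_eq, Complex.star_def] at h2
  have h3 : ∀ x, (starRingEnd ℂ) (W x k) * W x k = (Complex.normSq (W x k) : ℂ) :=
    fun x => by rw [mul_comm, Complex.mul_conj]
  simp only [h3] at h2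
  exact_mod_cast h2

private lemma renyi_entry_re (W : Matrix (Fin D) (Fin D) ℂ) (d : Fin D → ℝ) (i : Fin D) :
    ((W * Matrix.diagonal (fun k => (d k : ℂ)) * star W) i i).re
      = ∑ k, Complex.normSq (W i k) * d k := by
  rw [Matrix.mul_apply, Complex.re_sum]
  refine Finset.sum_congr rfl fun k _ => ?_
  rw [Matrix.mul_diagonal, Matrix.star_apply]
  have : W i k * (d k : ℂ) * star (W i k) = ((Complex.normSq (W i k) * d k : ℝ) : ℂ) := by
    rw [Complex.star_def, mul_right_comm, Complex.mul_conj]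
    push_cast; ring
  rw [this, Complex.ofReal_re]

/-- Key "doubly stochastic" inequality: for positive semidefinite `A`, any unitary `V` and
`0 < α < 1`, `∑ᵢ λᵢ(A)^α ≤ ∑ᵢ ((V∗AV)ᵢᵢ)^α`. -/
private lemma renyi_key_sum_le {α : ℝ} (hα0 : 0 < α) (hα1 : α < 1)
    {A : Matrix (Fin D) (Fin D) ℂ} (hA : A.PosSemidef) (V : Matrix (Fin D) (Fin D) ℂ)
    (hV : V ∈ Matrix.unitaryGroup (Fin D) ℂ) :
    ∑ i, hA.1.eigenvalues i ^ α ≤ ∑ i, ((star V * A * V) i i).re ^ α := by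
  set a := hA.1.eigenvalues with ha
  set W : Matrix (Fin D) (Fin D) ℂ := star V * (hA.1.eigenvectorUnitary : Matrix (Fin D) (Fin D) ℂ)
    with hWdef
  have hWmem : W ∈ Matrix.unitaryGroup (Fin D) ℂ :=
    mul_mem (Unitary.star_mem hV) hA.1.eigenvectorUnitary.2
  have hfact : star V * A * V = W * Matrix.diagonal (fun k => (a k : ℂ)) * star W := by
    conv_lhs => rw [hA.1.spectral_theorem, Unitary.conjStarAlgAut_apply]
    have : Matrix.diagonal ((RCLike.ofReal : ℝ → ℂ) ∘ a) = Matrix.diagonal (fun k => (a k : ℂ)) :=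
      rfl
    rw [hWdef, Matrix.star_mul, star_star, ← this]
    simp only [Matrix.mul_assoc]
    rfl
  have hent : ∀ i, ((star V * A * V) i i).re = ∑ k, Complex.normSq (W i k) * a k := by
    intro i; rw [hfact]; exact renyi_entry_re W a i
  have hconc : ConcaveOn ℝ (Set.Ici 0) (fun x : ℝ => x ^ α) :=
    (Real.strictConcaveOn_rpow hα0 hα1).concaveOn
  have hjen : ∀ i, ∑ k, Complex.normSq (W i k) * (a k ^ α)
      ≤ (∑ k, Complex.normSq (W i k) * a k) ^ α := by
    intro i
    have := hconc.le_map_sum (t := Finset.univ) (w := fun k => Complex.normSq (W i k))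
      (p := a) (fun k _ => Complex.normSq_nonneg _) (renyi_row_sum_one hWmem i)
      (fun k _ => hA.eigenvalues_nonneg k)
    simpa [smul_eq_mul] using this
  calc ∑ i, a i ^ α = ∑ k, (∑ i, Complex.normSq (W i k)) * (a k ^ α) := by
        refine Finset.sum_congr rfl fun k _ => ?_
        rw [renyi_col_sum_one hWmem k, one_mul]
    _ = ∑ i, ∑ k, Complex.normSq (W i k) * (a k ^ α) := by
        rw [Finset.sum_comm]
        exact Finset.sum_congr rfl fun k _ => by rw [Finset.sum_mul]
    _ ≤ ∑ i, (∑ k, Complex.normSq (W i k) * a k) ^ α :=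
        Finset.sum_le_sum fun i _ => hjen i
    _ = ∑ i, ((star V * A * V) i i).re ^ α :=
        Finset.sum_congr rfl fun i _ => by rw [hent i]

/-- The sum of eigenvalues of a Hermitian matrix is its trace. -/
private lemma renyi_sum_eigenvalues {A : Matrix (Fin D) (Fin D) ℂ} (hA : A.IsHermitian) :
    ((∑ i, hA.eigenvalues i : ℝ) : ℂ) = A.trace := by
  conv_rhs => rw [hA.spectral_theorem, Unitary.conjStarAlgAut_apply]
  rw [Matrix.trace_mul_comm, ← Matrix.mul_assoc,
    Matrix.mem_unitaryGroup_iff'.mp hA.eigenvectorUnitary.2, one_mul, Matrix.trace_diagonal]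
  push_cast
  rfl

private lemma renyi_g_pos {α : ℝ} (hα0 : 0 < α) {A : Matrix (Fin D) (Fin D) ℂ}
    (hA : A.PosSemidef) (htr : A.trace = 1) :
    0 < ∑ i, hA.1.eigenvalues i ^ α := by
  have hsum : ∑ i, hA.1.eigenvalues i = 1 := by
    have := renyi_sum_eigenvalues hA.1
    rw [htr] at this
    exact_mod_cast this
  have hex : ∃ i ∈ Finset.univ, 0 < hA.1.eigenvalues i := by
    by_contra h
    push_neg at h
    have : ∑ i, hA.1.eigenvalues i ≤ 0 :=
      Finset.sum_nonpos fun i _ => h i (Finset.mem_univ i)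
    linarith [hsum ▸ this]
  obtain ⟨i, hi, hipos⟩ := hex
  refine Finset.sum_pos' (fun k _ => Real.rpow_nonneg (hA.eigenvalues_nonneg k) α) ?_
  exact ⟨i, hi, Real.rpow_pos_of_pos hipos α⟩

end RenyiAux

/-- The Rényi entropy `S_α(ρ) = (1/(1−α)) ln Tr(ρ^α)` of a Hermitian matrix, via its
eigenvalues (`ρ^α` is defined by the functional calculus). -/
noncomputable def renyiEntropy {n : ℕ} (α : ℝ) (ρ : Matrix (Fin n) (Fin n) ℂ) : ℝ :=
  if h : ρ.IsHermitian then (1 / (1 - α)) * Real.log (∑ i, h.eigenvalues i ^ α) else 0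

/-- for `0 < α < 1` the Rényi entropy is concave on density matrices:
`∑_j λ_j S_α(ρ_j) ≤ S_α(∑_j λ_j ρ_j)`. -/
theorem renyiEntropy_concave (D n : ℕ) (α : ℝ) (hα0 : 0 < α) (hα1 : α < 1)
    (ρ : Fin n → Matrix (Fin D) (Fin D) ℂ)
    (hρ : ∀ j, (ρ j).PosSemidef) (htr : ∀ j, (ρ j).trace = 1)
    (w : Fin n → ℝ) (hw : ∀ j, 0 ≤ w j) (hwsum : ∑ j, w j = 1) :
    ∑ j, w j * renyiEntropy α (ρ j) ≤ renyiEntropy α (∑ j, (w j : ℂ) • ρ j) := by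
  set σ : Matrix (Fin D) (Fin D) ℂ := ∑ j, (w j : ℂ) • ρ j with hσdef
  have hσpsd : σ.PosSemidef := by
    rw [hσdef]
    refine Finset.sum_induction _ _ (fun a b ha hb => ha.add hb) Matrix.PosSemidef.zero
      (fun j _ => renyi_smul_posSemidef (hw j) (hρ j))
  have hσtr : σ.trace = 1 := by
    rw [hσdef, Matrix.trace_sum]
    have : ∀ j, ((w j : ℂ) • ρ j).trace = (w j : ℂ) := by
      intro j; rw [Matrix.trace_smul, htr j, smul_eq_mul, mul_one]
    rw [Finset.sum_congr rfl fun j _ => this j]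
    exact_mod_cast congrArg (Complex.ofReal ·) hwsum
  -- notation
  set g : Fin n → ℝ := fun j => ∑ i, (hρ j).1.eigenvalues i ^ α with hg
  set G : ℝ := ∑ i, hσpsd.1.eigenvalues i ^ α with hG
  have hgpos : ∀ j, 0 < g j := fun j => renyi_g_pos hα0 (hρ j) (htr j)
  have hGpos : 0 < G := renyi_g_pos hα0 hσpsd hσtr
  -- Step A : ∑ j, w j * g j ≤ G
  set V : Matrix (Fin D) (Fin D) ℂ := (hσpsd.1.eigenvectorUnitary : Matrix (Fin D) (Fin D) ℂ)
    with hVdef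
  have hVmem : V ∈ Matrix.unitaryGroup (Fin D) ℂ := hσpsd.1.eigenvectorUnitary.2
  set y : Fin n → Fin D → ℝ := fun j i => ((star V * ρ j * V) i i).re with hy
  have hypsd : ∀ j, (star V * ρ j * V).PosSemidef := by
    intro j
    rw [Matrix.star_eq_conjTranspose]
    exact (hρ j).conjTranspose_mul_mul_same V
  have hynn : ∀ j i, 0 ≤ y j i := fun j i => renyi_diag_re_nonneg (hypsd j) i
  have heig : ∀ i, hσpsd.1.eigenvalues i = ∑ j, w j * y j i := by
    intro i
    have hfact : star V * σ * V = ∑ j, (w j : ℂ) • (star V * ρ j * V) := by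
      rw [hσdef, Finset.mul_sum, Finset.sum_mul]
      refine Finset.sum_congr rfl fun j _ => ?_
      rw [Matrix.mul_smul, Matrix.smul_mul]
    have hdiag : star V * σ * V = diagonal (RCLike.ofReal ∘ hσpsd.1.eigenvalues) := by
      have := hσpsd.1.conjStarAlgAut_star_eigenvectorUnitary
      rw [Unitary.conjStarAlgAut_apply, Unitary.coe_star, star_star] at this
      exact this
    have h1 : (star V * σ * V) i i = ((hσpsd.1.eigenvalues i : ℝ) : ℂ) := by
      rw [hVdef] at *
      rw [hdiag]
      simp [Matrix.diagonal_apply_eq]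
    have h2 : (star V * σ * V) i i = ∑ j, (w j : ℂ) * ((star V * ρ j * V) i i) := by
      rw [hfact]
      simp [Matrix.sum_apply, Matrix.smul_apply, smul_eq_mul]
    have := h1.symm.trans h2
    have hre := congrArg Complex.re this
    rw [Complex.ofReal_re, Complex.re_sum] at hre
    rw [hre]
    exact Finset.sum_congr rfl fun j _ => by
      rw [hy]; simp [Complex.re_ofReal_mul]
  have hconc : ConcaveOn ℝ (Set.Ici 0) (fun x : ℝ => x ^ α) :=
    (Real.strictConcaveOn_rpow hα0 hα1).concaveOn
  have hjen : ∀ i, ∑ j, w j * (y j i ^ α) ≤ hσpsd.1.eigenvalues i ^ α := by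
    intro i
    rw [heig i]
    have := hconc.le_map_sum (t := Finset.univ) (w := w) (p := fun j => y j i)
      (fun j _ => hw j) hwsum (fun j _ => hynn j i)
    simpa [smul_eq_mul] using this
  have hkey : ∀ j, g j ≤ ∑ i, y j i ^ α := fun j =>
    renyi_key_sum_le hα0 hα1 (hρ j) V hVmem
  have hA : ∑ j, w j * g j ≤ G := by
    calc ∑ j, w j * g j ≤ ∑ j, w j * ∑ i, y j i ^ α :=
          Finset.sum_le_sum fun j _ => mul_le_mul_of_nonneg_left (hkey j) (hw j)
      _ = ∑ i, ∑ j, w j * (y j i ^ α) := by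
          rw [Finset.sum_comm]
          exact Finset.sum_congr rfl fun j _ => by rw [Finset.mul_sum]
      _ ≤ ∑ i, hσpsd.1.eigenvalues i ^ α := Finset.sum_le_sum fun i _ => hjen i
  -- Step B : conclude by concavity and monotonicity of log
  have hSpos : 0 < ∑ j, w j * g j := by
    have hex : ∃ j ∈ Finset.univ, 0 < w j := by
      by_contra h
      push_neg at h
      have : ∑ j, w j ≤ 0 := Finset.sum_nonpos fun j _ => h j (Finset.mem_univ j)
      linarith [hwsum ▸ this]
    obtain ⟨j, hj, hjpos⟩ := hex
    exact Finset.sum_pos' (fun k _ => mul_nonneg (hw k) (hgpos k).le)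
      ⟨j, hj, mul_pos hjpos (hgpos j)⟩
  have hlogjen : ∑ j, w j * Real.log (g j) ≤ Real.log (∑ j, w j * g j) := by
    have := (strictConcaveOn_log_Ioi.concaveOn).le_map_sum (t := Finset.univ) (w := w)
      (p := g) (fun j _ => hw j) hwsum (fun j _ => hgpos j)
    simpa [smul_eq_mul] using this
  have hlogmono : Real.log (∑ j, w j * g j) ≤ Real.log G := Real.log_le_log hSpos hA
  have hc : (0:ℝ) < 1 / (1 - α) := by
    apply div_pos one_pos; linarith
  have hfinal : ∑ j, w j * ((1 / (1 - α)) * Real.log (g j))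
      ≤ (1 / (1 - α)) * Real.log G := by
    have h1 : ∑ j, w j * ((1 / (1 - α)) * Real.log (g j))
        = (1 / (1 - α)) * ∑ j, w j * Real.log (g j) := by
      rw [Finset.mul_sum]
      exact Finset.sum_congr rfl fun j _ => by ring
    rw [h1]
    exact mul_le_mul_of_nonneg_left (hlogjen.trans hlogmono) hc.le
  -- unfold renyiEntropy
  have hrσ : renyiEntropy α σ = (1 / (1 - α)) * Real.log G := by
    rw [renyiEntropy, dif_pos hσpsd.1]
  have hrj : ∀ j, renyiEntropy α (ρ j) = (1 / (1 - α)) * Real.log (g j) := by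
    intro j; rw [renyiEntropy, dif_pos (hρ j).1]
  rw [hrσ]
  rw [Finset.sum_congr rfl fun j _ => by rw [hrj j]]
  exact hfinal
end

section
/- Let ρ be a density matrix on ℂ^{d_A} ⊗ ℂ^{d_Ā} with ρ ≤ I/M, let {|a_k⟩} be an orthonormal basis of ℂ^{d_A}, K ⊆ {1,…,d_A}, and for each k ∈ K let Q_k be an orthogonal projection on ℂ^{d_Ā}. Suppose Tr(ρ P_K) ≤ m/4 where P_K = Σ_{k∈K} |a_k⟩⟨a_k| ⊗ (I − Q_k) and m = |K|/d_A, and suppose Tr(Q_k)/M ≤ 1/(4 d_A) for all k ∈ K. Then Σ_{k∈K} ⟨a_k| Tr_Ā ρ |a_k⟩ ≤ m/2. -/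
open Matrix BigOperators Kronecker
open scoped ComplexOrder

/-- The partial trace over the second tensor factor. -/
noncomputable def ptraceB {dA dB : ℕ}
    (ρ : Matrix (Fin dA × Fin dB) (Fin dA × Fin dB) ℂ) : Matrix (Fin dA) (Fin dA) ℂ :=
  fun i j => ∑ l : Fin dB, ρ (i, l) (j, l)

lemma kron_conjTranspose {l m n p : Type*} (A : Matrix l m ℂ) (B : Matrix n p ℂ) :
    (A ⊗ₖ B)ᴴ = Aᴴ ⊗ₖ Bᴴ := by
  ext ⟨i, j⟩ ⟨k, s⟩
  simp [kroneckerMap_apply, conjTranspose_apply, mul_comm]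

lemma trace_psd_re_nonneg {n : Type*} [Fintype n] {A : Matrix n n ℂ}
    (hA : A.PosSemidef) : 0 ≤ A.trace.re := by
  classical
  have h : ∀ i, 0 ≤ (A i i).re := by
    intro i
    have := hA.dotProduct_mulVec_nonneg (Pi.single i 1)
    have h2 : star (Pi.single i 1 : n → ℂ) ⬝ᵥ A *ᵥ Pi.single i 1 = A i i := by
      rw [mulVec_single]
      simp [dotProduct, Pi.single_apply, apply_ite]
    rw [h2] at this
    exact (Complex.le_def.mp this).1
  simpa [Matrix.trace, Complex.re_sum] using Finset.sum_nonneg fun i _ => h i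

lemma trace_mul_psd_nonneg {n m : Type*} [Fintype n] [Fintype m] {A : Matrix n n ℂ}
    (hA : A.PosSemidef) (C : Matrix m n ℂ) : 0 ≤ (A * (Cᴴ * C)).trace.re := by
  have h : (A * (Cᴴ * C)).trace = (C * A * Cᴴ).trace := by
    rw [← Matrix.mul_assoc, Matrix.trace_mul_comm, Matrix.mul_assoc]
  rw [h]
  exact trace_psd_re_nonneg (hA.mul_mul_conjTranspose_same C)

lemma ptrace_as_trace {dA dB : ℕ} (ρ : Matrix (Fin dA × Fin dB) (Fin dA × Fin dB) ℂ)
    (a : Fin dA → ℂ) :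
    star a ⬝ᵥ (ptraceB ρ) *ᵥ a
      = (ρ * (Matrix.vecMulVec a (star a) ⊗ₖ (1 : Matrix (Fin dB) (Fin dB) ℂ))).trace := by
  classical
  simp only [Matrix.trace, Matrix.diag, Matrix.mul_apply, dotProduct, Matrix.mulVec, ptraceB,
    kroneckerMap_apply, vecMulVec_apply, Fintype.sum_prod_type, Matrix.one_apply, Pi.star_apply,
    mul_ite, mul_one, mul_zero, Finset.sum_ite_eq, Finset.sum_ite_eq', Finset.mem_univ, if_true,
    Finset.mul_sum, Finset.sum_mul]
  refine Finset.sum_congr rfl fun i _ => ?_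
  rw [Finset.sum_comm]
  exact Finset.sum_congr rfl fun l _ => Finset.sum_congr rfl fun j _ => by ring

lemma projKron_factor {dA dB : ℕ} (a : Fin dA → ℂ) (Q : Matrix (Fin dB) (Fin dB) ℂ)
    (hH : Q.IsHermitian) (hI : Q * Q = Q) :
    Matrix.vecMulVec a (star a) ⊗ₖ Q
      = ((Matrix.replicateRow Unit (star a)) ⊗ₖ Q)ᴴ * ((Matrix.replicateRow Unit (star a)) ⊗ₖ Q) := by
  rw [kron_conjTranspose, ← mul_kronecker_mul, conjTranspose_replicateRow, star_star,
    ← vecMulVec_eq Unit, hH.eq, hI]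

/-- let `ρ ≤ I/M` be a density matrix on `ℂ^{d_A} ⊗ ℂ^{d_Ā}`, `{|a_k⟩}` an
orthonormal basis of `ℂ^{d_A}`, `K` a subset of indices, `Q_k` projections on `ℂ^{d_Ā}`.
If `Tr(ρ P_K) ≤ m/4` with `P_K = ∑_{k∈K} |a_k⟩⟨a_k| ⊗ (I − Q_k)`, `m = |K|/d_A`, and
`Tr(Q_k)/M ≤ 1/(4 d_A)` for all `k ∈ K`, then `∑_{k∈K} ⟨a_k|Tr_Ā ρ|a_k⟩ ≤ m/2`. -/
theorem midspectrum_mass_bound (dA dB : ℕ) (hdA : 0 < dA) (M : ℝ) (hM : 0 < M)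
    (ρ : Matrix (Fin dA × Fin dB) (Fin dA × Fin dB) ℂ)
    (hρ : ρ.PosSemidef) (htr : ρ.trace = 1)
    (hle : ((M : ℂ)⁻¹ • (1 : Matrix (Fin dA × Fin dB) (Fin dA × Fin dB) ℂ) - ρ).PosSemidef)
    (a : Fin dA → Fin dA → ℂ)
    (ha : ∀ k k', star (a k) ⬝ᵥ a k' = if k = k' then 1 else 0)
    (K : Finset (Fin dA))
    (Q : Fin dA → Matrix (Fin dB) (Fin dB) ℂ)
    (hQ : ∀ k ∈ K, (Q k).IsHermitian ∧ Q k * Q k = Q k)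
    (m : ℝ) (hm : m = (K.card : ℝ) / dA)
    (hPK : (ρ * ∑ k ∈ K,
      Matrix.vecMulVec (a k) (star (a k)) ⊗ₖ ((1 : Matrix (Fin dB) (Fin dB) ℂ) - Q k)).trace.re
        ≤ m / 4)
    (hQtr : ∀ k ∈ K, (Q k).trace.re / M ≤ 1 / (4 * dA)) :
    ∑ k ∈ K, (star (a k) ⬝ᵥ (ptraceB ρ) *ᵥ a k).re ≤ m / 2 := by
  classical
  set P : Fin dA → Matrix (Fin dA) (Fin dA) ℂ :=
    fun k => Matrix.vecMulVec (a k) (star (a k)) with hPdef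
  have hsplit : ∀ k, P k ⊗ₖ (1 : Matrix (Fin dB) (Fin dB) ℂ)
      = P k ⊗ₖ (1 - Q k) + P k ⊗ₖ Q k := by
    intro k
    rw [← Matrix.kronecker_add, sub_add_cancel]
  -- key per-k bound on the Q-part
  have key : ∀ k ∈ K, (ρ * (P k ⊗ₖ Q k)).trace.re ≤ 1 / (4 * dA) := by
    intro k hk
    obtain ⟨hH, hI⟩ := hQ k hk
    have hfac := projKron_factor (a k) (Q k) hH hI
    have h0 := trace_mul_psd_nonneg hle ((Matrix.replicateRow Unit (star (a k))) ⊗ₖ Q k)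
    rw [← hfac] at h0
    have hexp : ((M : ℂ)⁻¹ • 1 - ρ) * (P k ⊗ₖ Q k)
        = (M : ℂ)⁻¹ • (P k ⊗ₖ Q k) - ρ * (P k ⊗ₖ Q k) := by
      rw [sub_mul, smul_mul_assoc, one_mul]
    rw [hexp, trace_sub, trace_smul, Complex.sub_re] at h0
    have htrP : (P k).trace = 1 := by
      have h1 := ha k k
      rw [if_pos rfl] at h1
      rw [← h1]
      simp only [Matrix.trace, Matrix.diag, vecMulVec_apply, dotProduct, Pi.star_apply]
      exact Finset.sum_congr rfl fun i _ => mul_comm _ _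
    have htrT : ((M : ℂ)⁻¹ • (P k ⊗ₖ Q k).trace).re = M⁻¹ * (Q k).trace.re := by
      rw [trace_kronecker, htrP, one_mul, smul_eq_mul, ← Complex.ofReal_inv]
      exact Complex.re_ofReal_mul _ _
    rw [htrT] at h0
    have : (ρ * (P k ⊗ₖ Q k)).trace.re ≤ M⁻¹ * (Q k).trace.re := by linarith
    refine this.trans ?_
    rw [inv_mul_eq_div]
    exact hQtr k hk
  -- decompose each diagonal element
  have hrw : ∀ k, (star (a k) ⬝ᵥ (ptraceB ρ) *ᵥ a k).re
      = (ρ * (P k ⊗ₖ ((1 : Matrix (Fin dB) (Fin dB) ℂ) - Q k))).trace.re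
        + (ρ * (P k ⊗ₖ Q k)).trace.re := by
    intro k
    rw [ptrace_as_trace, hsplit k, mul_add, trace_add, Complex.add_re]
  have hsum1 : ∑ k ∈ K, (ρ * (P k ⊗ₖ ((1 : Matrix (Fin dB) (Fin dB) ℂ) - Q k))).trace.re
      = (ρ * ∑ k ∈ K,
          Matrix.vecMulVec (a k) (star (a k)) ⊗ₖ ((1 : Matrix (Fin dB) (Fin dB) ℂ) - Q k)).trace.re := by
    rw [Matrix.mul_sum, trace_sum, Complex.re_sum]
  have hsum2 : ∑ k ∈ K, (ρ * (P k ⊗ₖ Q k)).trace.re ≤ (K.card : ℝ) * (1 / (4 * dA)) := by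
    calc ∑ k ∈ K, (ρ * (P k ⊗ₖ Q k)).trace.re ≤ ∑ k ∈ K, 1 / (4 * (dA : ℝ)) :=
          Finset.sum_le_sum key
      _ = (K.card : ℝ) * (1 / (4 * dA)) := by rw [Finset.sum_const, nsmul_eq_mul]
  have hcard : (K.card : ℝ) * (1 / (4 * dA)) = m / 4 := by
    rw [hm]; ring
  calc ∑ k ∈ K, (star (a k) ⬝ᵥ (ptraceB ρ) *ᵥ a k).re
      = ∑ k ∈ K, (ρ * (P k ⊗ₖ ((1 : Matrix (Fin dB) (Fin dB) ℂ) - Q k))).trace.re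
        + ∑ k ∈ K, (ρ * (P k ⊗ₖ Q k)).trace.re := by
        rw [← Finset.sum_add_distrib]
        exact Finset.sum_congr rfl fun k _ => hrw k
    _ ≤ m / 4 + m / 4 := by
        refine add_le_add ?_ (hsum2.trans_eq hcard)
        rw [hsum1]; exact hPK
    _ = m / 2 := by ring
end
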